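/- In the DCTCP fluid model, let W* = (C·RTT + K)/N with C, RTT, K, N > 0, α = sqrt(2/W*), D = (W*+1)·α/2, and define the relative steady-state oscillation ε_rel = D / ((W*+1)·(1 − α/4)) = 2α/(4 − α). If additionally K > (1/7)·(C·RTT) and α ≤ 1, then ε_rel = 2α/(4−α) ≤ (2/3)·α for α ∈ (0,1], and sqrt(1/(2W*)) < sqrt(7N/(16·C·RTT)). -/
import Mathlib


theorem dctcp_relative_oscillation
    (C RTT K N Wstar α D : ℝ)
    (hC : 0 < C) (hRTT : 0 < RTT) (hK : 0 < K) (hN : 0 < N)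
    (hKbound : K > (1 / 7) * (C * RTT))
    (hW : Wstar = (C * RTT + K) / N)
    (hα : α = Real.sqrt (2 / Wstar))
    (hD : D = (Wstar + 1) * α / 2)
    (hα1 : α ≤ 1) :
    D / ((Wstar + 1) * (1 - α / 4)) = 2 * α / (4 - α) ∧
    2 * α / (4 - α) ≤ (2 / 3) * α ∧
    Real.sqrt (1 / (2 * Wstar)) < Real.sqrt (7 * N / (16 * (C * RTT))) := by
  have hWpos : 0 < Wstar := by
    rw [hW]; positivity
  have hαpos : 0 < α := by
    rw [hα]; exact Real.sqrt_pos.mpr (by positivity)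
  have hW1 : (0:ℝ) < Wstar + 1 := by linarith
  have h4α : (0:ℝ) < 4 - α := by linarith
  refine ⟨?_, ?_, ?_⟩
  · rw [hD]
    field_simp
    ring
  · rw [div_le_iff₀ h4α]
    nlinarith
  · apply Real.sqrt_lt_sqrt (by positivity)
    rw [hW]
    have hNe : N ≠ 0 := hN.ne'
    have hsum : 0 < C * RTT + K := by positivity
    have h2 : 2 * ((C * RTT + K) / N) = (2 * (C * RTT + K)) / N := by ring
    rw [h2, one_div_div, div_lt_div_iff₀ (by positivity) (by positivity)]
    nlinarith [mul_pos hN (mul_pos hC hRTT)]
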